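/- KL divergence bound between nearby two-spike Gaussian mixtures (Lemma C.1): There is an absolute constant C > 0 with the following property. Let γ* ∈ (0,1), ζ* ∈ (0,1/2), and ε ∈ (0, (2/3)ζ*). Let P_0 = (1−ζ*) N(0,1) + ζ* N(γ*, 1), and let P_1 = (1−ζ) N(0,1) + ζ N(γ, 1) where ζ = ζ* − ε and γ = γ* ζ*/ζ. Then KL(P_1 ‖ P_0) ≤ C ε² γ*⁴. -/

import Mathlib

open MeasureTheory ProbabilityTheory Set

open Real

open scoped ENNReal NNReal

/-- Kullback–Leibler divergence `KL(P ‖ Q) = ∫ log(dP/dQ) dP`. -/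
noncomputable def klDiv (P Q : Measure ℝ) : ℝ :=
  ∫ x, Real.log ((P.rnDeriv Q x).toReal) ∂P

/-- The two-spike Gaussian mixture `(1−ζ)N(0,1) + ζN(γ,1)`. -/
noncomputable def twoSpikeMix (ζ γ : ℝ) : Measure ℝ :=
  ENNReal.ofReal (1 - ζ) • gaussianReal 0 1 + ENNReal.ofReal ζ • gaussianReal γ 1


lemma gauss_shift (μ x : ℝ) :
    gaussianPDFReal μ 1 x = gaussianPDFReal 0 1 x * Real.exp (μ*x - μ^2/2) := by
  simp only [gaussianPDFReal, NNReal.coe_one, mul_one]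
  have : rexp (- (x - μ)^2 / 2) = rexp (-(x-0)^2/2) * rexp (μ*x - μ^2/2) := by
    rw [← Real.exp_add]
    congr 1
    ring
  rw [this]
  ring

lemma one_sub_exp_bound (t : ℝ) :
    0 ≤ 1 - (1-t) * Real.exp t ∧ 1 - (1-t) * Real.exp t ≤ t^2 * Real.exp |t| := by
  have hpos := Real.exp_pos t
  constructor
  · have h1 : (1-t) ≤ Real.exp (-t) := by linarith [Real.add_one_le_exp (-t)]
    have h2 : (1-t) * Real.exp t ≤ Real.exp (-t) * Real.exp t :=
      mul_le_mul_of_nonneg_right h1 hpos.le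
    rw [← Real.exp_add] at h2
    simp at h2
    linarith
  · rcases le_or_gt 0 t with ht | ht
    · rw [abs_of_nonneg ht]
      have hexp := Real.add_one_le_exp t
      have hq : (0:ℝ) < 1 - t + t^2 := by nlinarith
      have := mul_le_mul_of_nonneg_left hexp hq.le
      nlinarith
    · rw [abs_of_neg ht]
      have h1 : (1-t) * (1+t) ≤ (1-t) * Real.exp t :=
        mul_le_mul_of_nonneg_left (by linarith [Real.add_one_le_exp t]) (by linarith)
      have h2 : (1:ℝ) ≤ Real.exp (-t) := by
        rw [Real.one_le_exp_iff]; linarith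
      nlinarith [sq_nonneg t]

set_option maxHeartbeats 2000000 in
/-- deriv bound -/
lemma deriv_val_bound (γs μ x : ℝ) (hγ0 : 0 < γs) (hγ1 : γs ≤ 1)
    (hμl : γs ≤ μ) (hμu : μ ≤ 3*γs) :
    |1 - Real.exp (μ*x - μ^2/2) * (1 - μ*x + μ^2)| ≤ 36*γs^2*Real.exp (4*|x| + 9/2) := by
  have hμ0 : 0 < μ := lt_of_lt_of_le hγ0 hμl
  have hμ3 : μ ≤ 3 := by linarith
  have harg : μ*x - μ^2/2 = μ*(x-μ/2) := by ring
  have hpoly : 1 - μ*x + μ^2 = 1 - μ*(x-μ/2) + μ^2/2 := by ring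
  rw [harg, hpoly]
  obtain ⟨t, ht⟩ : ∃ t, μ*(x-μ/2) = t := ⟨_, rfl⟩
  rw [ht]
  have h1 := one_sub_exp_bound t
  have hexpt : Real.exp t ≤ Real.exp |t| := Real.exp_le_exp.mpr (le_abs_self t)
  have habs : |1 - Real.exp t * (1 - t + μ^2/2)| ≤ t^2 * Real.exp |t| + μ^2/2 * Real.exp |t| := by
    have hrw : 1 - Real.exp t * (1 - t + μ^2/2)
        = (1 - (1-t)*Real.exp t) - Real.exp t * (μ^2/2) := by ring
    rw [hrw, abs_sub_le_iff]
    have h2 : (0:ℝ) ≤ Real.exp t * (μ^2/2) := by positivity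
    have h2' : (0:ℝ) ≤ μ^2/2 * Real.exp |t| := by positivity
    have ht2' : (0:ℝ) ≤ t^2 * Real.exp |t| := by positivity
    have h3 : Real.exp t * (μ^2/2) ≤ μ^2/2 * Real.exp |t| := by
      rw [mul_comm]
      exact mul_le_mul_of_nonneg_left hexpt (by positivity)
    constructor
    · linarith [h1.2]
    · linarith [h1.1]
  have h5 : |x - μ/2| ≤ |x| + 3/2 := by
    calc |x - μ/2| ≤ |x| + |μ/2| := abs_sub x (μ/2)
      _ ≤ |x| + 3/2 := by rw [abs_of_nonneg (by linarith : (0:ℝ) ≤ μ/2)]; linarith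
  have ht2 : t^2 + μ^2/2 ≤ μ^2 * ((|x|+2)^2) := by
    have h4 : (x - μ/2)^2 ≤ (|x| + 3/2)^2 := by
      calc (x - μ/2)^2 = |x - μ/2|^2 := (sq_abs _).symm
        _ ≤ (|x| + 3/2)^2 := by nlinarith [abs_nonneg (x - μ/2), abs_nonneg x]
    have hx0 := abs_nonneg x
    have ht' : t^2 = μ^2 * (x - μ/2)^2 := by rw [← ht]; ring
    nlinarith [sq_nonneg μ]
  have hxexp : (|x|+2)^2 ≤ 4 * Real.exp |x| := by
    have := Real.add_one_le_exp (|x|/2)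
    have h6 : (1 + |x|/2)^2 ≤ (Real.exp (|x|/2))^2 := by
      nlinarith [abs_nonneg x, Real.exp_pos (|x|/2)]
    have h7 : Real.exp (|x|/2) ^ 2 = Real.exp |x| := by
      rw [sq, ← Real.exp_add]
      norm_num
    nlinarith [abs_nonneg x]
  have htabs : |t| ≤ 3*|x| + 9/2 := by
    rw [← ht, abs_mul, abs_of_pos hμ0]
    nlinarith [abs_nonneg x, abs_nonneg (x - μ/2)]
  have hexpmono : Real.exp |t| ≤ Real.exp (3*|x| + 9/2) := Real.exp_le_exp.mpr htabs
  have hμ2 : μ^2 ≤ 9*γs^2 := by nlinarith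
  calc |1 - Real.exp t * (1 - t + μ^2/2)|
      ≤ (t^2 + μ^2/2) * Real.exp |t| := by linarith [habs]
    _ ≤ (μ^2 * (|x|+2)^2) * Real.exp (3*|x| + 9/2) := by
        apply mul_le_mul ht2 hexpmono (Real.exp_pos _).le
        positivity
    _ ≤ (9*γs^2 * (4 * Real.exp |x|)) * Real.exp (3*|x| + 9/2) := by
        apply mul_le_mul_of_nonneg_right _ (Real.exp_pos _).le
        have h8 : μ^2 * (|x|+2)^2 ≤ 9*γs^2 * (|x|+2)^2 :=
          mul_le_mul_of_nonneg_right hμ2 (sq_nonneg _)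
        have h9 : 9*γs^2 * (|x|+2)^2 ≤ 9*γs^2 * (4*Real.exp |x|) :=
          mul_le_mul_of_nonneg_left hxexp (by positivity)
        linarith
    _ = 36*γs^2*Real.exp (4*|x| + 9/2) := by
        have hE : Real.exp (4*|x| + 9/2) = Real.exp |x| * Real.exp (3*|x| + 9/2) := by
          rw [← Real.exp_add]
          congr 1
          ring
        rw [hE]
        ring

set_option maxHeartbeats 2000000 in
/-- Pointwise bound on difference of mixture densities via the mean value theorem. -/
lemma density_diff_bound (γs ζ ζs x : ℝ) (hζ0 : 0 < ζ) (hζζs : ζ < ζs)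
    (hγ0 : 0 < γs) (hγ1 : γs ≤ 1) (hζ3 : ζs ≤ 3*ζ) :
    |(ζs - ζ) * gaussianPDFReal 0 1 x + ζ * gaussianPDFReal (γs*ζs/ζ) 1 x
      - ζs * gaussianPDFReal γs 1 x|
    ≤ 36 * (ζs - ζ) * γs^2 * Real.exp (4*|x| + 9/2) * gaussianPDFReal 0 1 x := by
  have hζs0 : 0 < ζs := lt_trans hζ0 hζζs
  set m : ℝ := γs * ζs with hm
  have hm0 : 0 < m := by positivity
  have hg0 : 0 < gaussianPDFReal 0 1 x := gaussianPDFReal_pos 0 1 x one_ne_zero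
  -- F and its derivative
  set F : ℝ → ℝ := fun u => u * Real.exp (m*x*u⁻¹ - m^2/2*(u⁻¹)^2) with hF
  set F' : ℝ → ℝ := fun u => Real.exp (m*x*u⁻¹ - m^2/2*(u⁻¹)^2)
      * (1 - (m/u)*x + (m/u)^2) with hF'
  have hderiv : ∀ u : ℝ, 0 < u → HasDerivAt F (F' u) u := by
    intro u hu
    have hu0 : u ≠ 0 := ne_of_gt hu
    have hinv : HasDerivAt (fun v : ℝ => v⁻¹) (-(u^2)⁻¹) u := hasDerivAt_inv hu0
    have h1 : HasDerivAt (fun v : ℝ => m*x*v⁻¹) (m*x*(-(u^2)⁻¹)) u := hinv.const_mul (m*x)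
    have h2 : HasDerivAt (fun v : ℝ => (v⁻¹)^2) ((2:ℕ)*(u⁻¹)^1*(-(u^2)⁻¹)) u := hinv.pow 2
    have h3 : HasDerivAt (fun v : ℝ => m^2/2*(v⁻¹)^2) (m^2/2*((2:ℕ)*(u⁻¹)^1*(-(u^2)⁻¹))) u :=
      h2.const_mul (m^2/2)
    have harg : HasDerivAt (fun v : ℝ => m*x*v⁻¹ - m^2/2*(v⁻¹)^2)
        (m*x*(-(u^2)⁻¹) - m^2/2*((2:ℕ)*(u⁻¹)^1*(-(u^2)⁻¹))) u := h1.sub h3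
    have hexp := harg.exp
    have hmul := (hasDerivAt_id u).mul hexp
    have : F' u = 1 * Real.exp (m*x*u⁻¹ - m^2/2*(u⁻¹)^2)
        + u * (Real.exp (m*x*u⁻¹ - m^2/2*(u⁻¹)^2)
          * (m*x*(-(u^2)⁻¹) - m^2/2*((2:ℕ)*(u⁻¹)^1*(-(u^2)⁻¹)))) := by
      rw [hF']
      field_simp
      ring
    rw [this]
    exact hmul
  -- rewrite gaussian densities via F
  have hζne : (ζ:ℝ) ≠ 0 := ne_of_gt hζ0
  have hζsne : (ζs:ℝ) ≠ 0 := ne_of_gt hζs0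
  have hgζ : ζ * gaussianPDFReal (γs*ζs/ζ) 1 x = gaussianPDFReal 0 1 x * F ζ := by
    rw [gauss_shift (γs*ζs/ζ) x, hF]
    have : (γs*ζs/ζ)*x - (γs*ζs/ζ)^2/2 = m*x*ζ⁻¹ - m^2/2*(ζ⁻¹)^2 := by
      rw [hm]; field_simp
    rw [this]
    ring
  have hgζs : ζs * gaussianPDFReal γs 1 x = gaussianPDFReal 0 1 x * F ζs := by
    rw [gauss_shift γs x, hF]
    have : γs*x - γs^2/2 = m*x*ζs⁻¹ - m^2/2*(ζs⁻¹)^2 := by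
      rw [hm]; field_simp
    rw [this]
    ring
  -- MVT
  have hcont : ContinuousOn F (Set.Icc ζ ζs) := by
    intro u hu
    exact (hderiv u (lt_of_lt_of_le hζ0 hu.1)).continuousAt.continuousWithinAt
  obtain ⟨c, hc, hceq⟩ := exists_hasDerivAt_eq_slope F F' hζζs hcont
    (fun u hu => hderiv u (lt_trans hζ0 hu.1))
  have hc0 : 0 < c := lt_trans hζ0 hc.1
  have hFdiff : F ζs - F ζ = F' c * (ζs - ζ) := by
    rw [hceq, div_mul_cancel₀]
    exact sub_ne_zero.mpr (ne_of_gt hζζs)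
  -- the expression equals g0 * (ζs - ζ) * (1 - F' c)
  have hexpr : (ζs - ζ) * gaussianPDFReal 0 1 x + ζ * gaussianPDFReal (γs*ζs/ζ) 1 x
      - ζs * gaussianPDFReal γs 1 x
      = gaussianPDFReal 0 1 x * ((ζs - ζ) * (1 - F' c)) := by
    rw [hgζ, hgζs]
    have : F ζ - F ζs = -(F' c * (ζs - ζ)) := by linarith [hFdiff]
    nlinarith [this]
  rw [hexpr, abs_mul, abs_mul, abs_of_pos hg0, abs_of_pos (by linarith : (0:ℝ) < ζs - ζ)]
  -- bound |1 - F' c|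
  have hμl : γs ≤ m/c := by
    rw [hm, le_div_iff₀ hc0]
    nlinarith [hc.2]
  have hμu : m/c ≤ 3*γs := by
    rw [hm, div_le_iff₀ hc0]
    nlinarith [hc.1]
  have hbnd := deriv_val_bound γs (m/c) x hγ0 hγ1 hμl hμu
  have hFc : F' c = Real.exp ((m/c)*x - (m/c)^2/2) * (1 - (m/c)*x + (m/c)^2) := by
    have harg2 : m*x*c⁻¹ - m^2/2*(c⁻¹)^2 = (m/c)*x - (m/c)^2/2 := by
      field_simp
    simp only [hF']
    rw [harg2]
  rw [hFc] at *
  calc gaussianPDFReal 0 1 x * ((ζs - ζ) * |1 - Real.exp ((m/c)*x - (m/c)^2/2) * (1 - (m/c)*x + (m/c)^2)|)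
      ≤ gaussianPDFReal 0 1 x * ((ζs - ζ) * (36*γs^2*Real.exp (4*|x| + 9/2))) := by
        apply mul_le_mul_of_nonneg_left _ hg0.le
        exact mul_le_mul_of_nonneg_left hbnd (by linarith)
    _ = 36 * (ζs - ζ) * γs^2 * Real.exp (4*|x| + 9/2) * gaussianPDFReal 0 1 x := by ring


/-- Real density of the two-spike mixture. -/
noncomputable def mixPDF (a b : ℝ) : ℝ → ℝ :=
  fun x => (1-a) * gaussianPDFReal 0 1 x + a * gaussianPDFReal b 1 x

lemma mixPDF_pos (a b : ℝ) (h0 : 0 ≤ a) (h1 : a ≤ 1) (x : ℝ) : 0 < mixPDF a b x := by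
  have hg0 := gaussianPDFReal_pos 0 1 x one_ne_zero
  have hgb := gaussianPDFReal_pos b 1 x one_ne_zero
  rw [mixPDF]
  rcases le_or_gt a (1/2) with h | h
  · nlinarith
  · nlinarith

lemma measurable_mixPDF (a b : ℝ) : Measurable (mixPDF a b) :=
  ((measurable_gaussianPDFReal 0 1).const_mul _).add
    ((measurable_gaussianPDFReal b 1).const_mul _)

lemma integrable_mixPDF (a b : ℝ) : Integrable (mixPDF a b) :=
  (((integrable_gaussianPDFReal 0 1).const_mul _).add
    ((integrable_gaussianPDFReal b 1).const_mul _))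

lemma integral_mixPDF (a b : ℝ) : ∫ x, mixPDF a b x = 1 := by
  simp only [mixPDF]
  rw [integral_add ((integrable_gaussianPDFReal 0 1).const_mul _)
    ((integrable_gaussianPDFReal b 1).const_mul _),
    integral_const_mul, integral_const_mul,
    integral_gaussianPDFReal_eq_one 0 one_ne_zero,
    integral_gaussianPDFReal_eq_one b one_ne_zero]
  ring

lemma twoSpikeMix_eq (a b : ℝ) (h0 : 0 ≤ a) (h1 : a ≤ 1) :
    twoSpikeMix a b = volume.withDensity (fun x => ENNReal.ofReal (mixPDF a b x)) := by
  rw [twoSpikeMix, gaussianReal_of_var_ne_zero 0 one_ne_zero,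
    gaussianReal_of_var_ne_zero b one_ne_zero,
    ← withDensity_smul' _ _ ENNReal.ofReal_ne_top,
    ← withDensity_smul' _ _ ENNReal.ofReal_ne_top,
    ← withDensity_add_left ((measurable_gaussianPDF 0 1).const_smul _)]
  congr 1
  funext x
  simp only [Pi.add_apply, Pi.smul_apply, smul_eq_mul, gaussianPDF, mixPDF]
  rw [ENNReal.ofReal_add (mul_nonneg (by linarith) (gaussianPDFReal_nonneg 0 1 x))
    (mul_nonneg h0 (gaussianPDFReal_nonneg b 1 x)),
    ENNReal.ofReal_mul (by linarith), ENNReal.ofReal_mul h0]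

lemma twoSpikeMix_finite (a b : ℝ) : IsFiniteMeasure (twoSpikeMix a b) := by
  constructor
  rw [twoSpikeMix]
  simp only [Measure.add_apply, Measure.smul_apply, measure_univ, smul_eq_mul, mul_one]
  exact ENNReal.add_lt_top.mpr ⟨ENNReal.ofReal_lt_top, ENNReal.ofReal_lt_top⟩

/-- The KL divergence between two-spike mixtures as a Lebesgue integral. -/
lemma klDiv_twoSpikeMix_eq (a b a' b' : ℝ) (h0 : 0 ≤ a) (h1 : a ≤ 1)
    (h0' : 0 ≤ a') (h1' : a' ≤ 1) :
    klDiv (twoSpikeMix a b) (twoSpikeMix a' b')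
      = ∫ x, mixPDF a b x * Real.log (mixPDF a b x / mixPDF a' b' x) := by
  have hp1 := mixPDF_pos a b h0 h1
  have hp0 := mixPDF_pos a' b' h0' h1'
  set f1 : ℝ → ℝ≥0∞ := fun x => ENNReal.ofReal (mixPDF a b x) with hf1def
  set f0 : ℝ → ℝ≥0∞ := fun x => ENNReal.ofReal (mixPDF a' b' x) with hf0def
  have hmix1 := twoSpikeMix_eq a b h0 h1
  have hmix0 := twoSpikeMix_eq a' b' h0' h1'
  have hmf1 : Measurable f1 := (measurable_mixPDF a b).ennreal_ofReal
  have hmf0 : Measurable f0 := (measurable_mixPDF a' b').ennreal_ofReal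
  haveI hfin : IsFiniteMeasure (volume.withDensity f1) := by
    rw [← hmix1]; exact twoSpikeMix_finite a b
  have hac : volume.withDensity f1 ≪ (volume : Measure ℝ) :=
    withDensity_absolutelyContinuous _ _
  have h1' : (volume.withDensity f1).rnDeriv (volume.withDensity f0)
      =ᵐ[volume] fun x => (f0 x)⁻¹ * (volume.withDensity f1).rnDeriv volume x :=
    Measure.rnDeriv_withDensity_right _ _ hmf0.aemeasurable
      (ae_of_all _ fun x => by
        simp only [f0, ne_eq, ENNReal.ofReal_eq_zero, not_le]
        exact hp0 x)
      (ae_of_all _ fun x => ENNReal.ofReal_ne_top)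
  have h2' : (volume.withDensity f1).rnDeriv volume =ᵐ[volume] f1 :=
    Measure.rnDeriv_withDensity volume hmf1
  have hrn : (volume.withDensity f1).rnDeriv (volume.withDensity f0)
      =ᵐ[volume] fun x => (f0 x)⁻¹ * f1 x := by
    filter_upwards [h1', h2'] with x hx hx2
    rw [hx, hx2]
  have hae : (fun x => Real.log (((volume.withDensity f1).rnDeriv (volume.withDensity f0) x).toReal))
      =ᵐ[volume.withDensity f1] fun x => Real.log (mixPDF a b x / mixPDF a' b' x) := by
    filter_upwards [hac.ae_eq hrn] with x hx
    rw [hx]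
    congr 1
    rw [ENNReal.toReal_mul, ENNReal.toReal_inv, hf1def, hf0def,
      ENNReal.toReal_ofReal (hp0 x).le, ENNReal.toReal_ofReal (hp1 x).le,
      inv_mul_eq_div]
  rw [klDiv, hmix1, hmix0, integral_congr_ae hae]
  have hwd : volume.withDensity f1
      = volume.withDensity (fun x => ((Real.toNNReal (mixPDF a b x) : ℝ≥0) : ℝ≥0∞)) := rfl
  rw [hwd, integral_withDensity_eq_integral_smul (measurable_mixPDF a b).real_toNNReal]
  refine integral_congr_ae (ae_of_all _ fun x => ?_)
  simp only [NNReal.smul_def]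
  rw [Real.coe_toNNReal _ (hp1 x).le, smul_eq_mul]

set_option maxHeartbeats 2000000 in
lemma main_aux (γs ζs ε : ℝ) (hγ : γs ∈ Set.Ioo (0:ℝ) 1) (hζ : ζs ∈ Set.Ioo (0:ℝ) (1/2))
    (hε : ε ∈ Set.Ioo (0:ℝ) (2/3*ζs)) :
    klDiv (twoSpikeMix (ζs - ε) (γs * ζs / (ζs - ε))) (twoSpikeMix ζs γs)
      ≤ 5184 * Real.exp 41 * (ε^2 * γs^4) := by
  obtain ⟨hγ0, hγ1⟩ := hγ
  obtain ⟨hζs0, hζhalf⟩ := hζ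
  obtain ⟨hε0, hεu⟩ := hε
  have hζ0 : 0 < ζs - ε := by linarith
  have hζlt : ζs - ε < ζs := by linarith
  have hζ3 : ζs ≤ 3*(ζs - ε) := by linarith
  rw [klDiv_twoSpikeMix_eq (ζs - ε) (γs * ζs / (ζs - ε)) ζs γs hζ0.le (by linarith)
    hζs0.le (by linarith)]
  by_cases hint : Integrable (fun x => mixPDF (ζs - ε) (γs * ζs / (ζs - ε)) x
      * Real.log (mixPDF (ζs - ε) (γs * ζs / (ζs - ε)) x / mixPDF ζs γs x)) volume
  swap
  · rw [integral_undef hint]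
    positivity
  have hadd : Integrable (fun x => gaussianPDFReal 8 1 x + gaussianPDFReal (-8) 1 x) volume :=
    (integrable_gaussianPDFReal 8 1).add (integrable_gaussianPDFReal (-8) 1)
  have hcm : Integrable (fun x => 2592 * Real.exp 41 * (ε^2 * γs^4)
      * (gaussianPDFReal 8 1 x + gaussianPDFReal (-8) 1 x)) volume := hadd.const_mul _
  have hsub : Integrable (fun x => mixPDF (ζs - ε) (γs * ζs / (ζs - ε)) x - mixPDF ζs γs x)
      volume := (integrable_mixPDF _ _).sub (integrable_mixPDF _ _)
  have hGint : Integrable (fun x => 2592 * Real.exp 41 * (ε^2 * γs^4)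
      * (gaussianPDFReal 8 1 x + gaussianPDFReal (-8) 1 x)
      + (mixPDF (ζs - ε) (γs * ζs / (ζs - ε)) x - mixPDF ζs γs x)) volume := hcm.add hsub
  have hle : ∀ x : ℝ, mixPDF (ζs - ε) (γs * ζs / (ζs - ε)) x
      * Real.log (mixPDF (ζs - ε) (γs * ζs / (ζs - ε)) x / mixPDF ζs γs x)
      ≤ 2592 * Real.exp 41 * (ε^2 * γs^4)
        * (gaussianPDFReal 8 1 x + gaussianPDFReal (-8) 1 x)
      + (mixPDF (ζs - ε) (γs * ζs / (ζs - ε)) x - mixPDF ζs γs x) := by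
    intro x
    have hg0 := gaussianPDFReal_pos 0 1 x one_ne_zero
    have hp1x := mixPDF_pos (ζs - ε) (γs * ζs / (ζs - ε)) hζ0.le (by linarith) x
    have hp0x := mixPDF_pos ζs γs hζs0.le (by linarith) x
    have hdiff := density_diff_bound γs (ζs - ε) ζs x hζ0 hζlt hγ0 hγ1.le hζ3
    have heps : ζs - (ζs - ε) = ε := by ring
    rw [heps] at hdiff
    have hd_eq : mixPDF (ζs - ε) (γs * ζs / (ζs - ε)) x - mixPDF ζs γs x
        = ε * gaussianPDFReal 0 1 x + (ζs - ε) * gaussianPDFReal (γs * ζs / (ζs - ε)) 1 x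
          - ζs * gaussianPDFReal γs 1 x := by
      simp only [mixPDF]
      ring
    have habs : |mixPDF (ζs - ε) (γs * ζs / (ζs - ε)) x - mixPDF ζs γs x|
        ≤ 36 * ε * γs^2 * Real.exp (4*|x| + 9/2) * gaussianPDFReal 0 1 x := by
      rw [hd_eq]
      exact hdiff
    have hlog : Real.log (mixPDF (ζs - ε) (γs * ζs / (ζs - ε)) x / mixPDF ζs γs x)
        ≤ mixPDF (ζs - ε) (γs * ζs / (ζs - ε)) x / mixPDF ζs γs x - 1 :=
      Real.log_le_sub_one_of_pos (div_pos hp1x hp0x)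
    have h1 : mixPDF (ζs - ε) (γs * ζs / (ζs - ε)) x
          * Real.log (mixPDF (ζs - ε) (γs * ζs / (ζs - ε)) x / mixPDF ζs γs x)
        ≤ mixPDF (ζs - ε) (γs * ζs / (ζs - ε)) x
          * (mixPDF (ζs - ε) (γs * ζs / (ζs - ε)) x / mixPDF ζs γs x - 1) :=
      mul_le_mul_of_nonneg_left hlog hp1x.le
    have h2 : mixPDF (ζs - ε) (γs * ζs / (ζs - ε)) x
          * (mixPDF (ζs - ε) (γs * ζs / (ζs - ε)) x / mixPDF ζs γs x - 1)
        = (mixPDF (ζs - ε) (γs * ζs / (ζs - ε)) x - mixPDF ζs γs x)^2 / mixPDF ζs γs x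
          + (mixPDF (ζs - ε) (γs * ζs / (ζs - ε)) x - mixPDF ζs γs x) := by
      field_simp
      ring
    have hsq : (mixPDF (ζs - ε) (γs * ζs / (ζs - ε)) x - mixPDF ζs γs x)^2 / mixPDF ζs γs x
        ≤ 2592 * (ε^2 * γs^4) * (Real.exp (8*|x| + 9) * gaussianPDFReal 0 1 x) := by
      rw [div_le_iff₀ hp0x]
      have hb2 : (mixPDF (ζs - ε) (γs * ζs / (ζs - ε)) x - mixPDF ζs γs x)^2
          ≤ (36 * ε * γs^2 * Real.exp (4*|x| + 9/2) * gaussianPDFReal 0 1 x)^2 := by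
        have h := pow_le_pow_left₀ (abs_nonneg _) habs 2
        rwa [sq_abs] at h
      have hp0g : (1/2) * gaussianPDFReal 0 1 x ≤ mixPDF ζs γs x := by
        have hgγs := gaussianPDFReal_nonneg γs 1 x
        simp only [mixPDF]
        nlinarith
      have hEE : Real.exp (4*|x| + 9/2) * Real.exp (4*|x| + 9/2) = Real.exp (8*|x| + 9) := by
        rw [← Real.exp_add]
        congr 1
        ring
      have hKnn : (0:ℝ) ≤ 2592 * (ε^2 * γs^4) * (Real.exp (8*|x| + 9) * gaussianPDFReal 0 1 x) := by
        positivity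
      have hKp : 2592 * (ε^2 * γs^4) * (Real.exp (8*|x| + 9) * gaussianPDFReal 0 1 x)
            * ((1/2) * gaussianPDFReal 0 1 x)
          ≤ 2592 * (ε^2 * γs^4) * (Real.exp (8*|x| + 9) * gaussianPDFReal 0 1 x)
            * mixPDF ζs γs x :=
        mul_le_mul_of_nonneg_left hp0g hKnn
      have hb3 : (36 * ε * γs^2 * Real.exp (4*|x| + 9/2) * gaussianPDFReal 0 1 x)^2
          = 1296 * (ε^2 * γs^4) * Real.exp (8*|x| + 9) * (gaussianPDFReal 0 1 x)^2 := by
        rw [← hEE]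
        ring
      linarith [hb2, hKp, hb3.le, hb3.ge]
    have hgauss : Real.exp (8*|x| + 9) * gaussianPDFReal 0 1 x
        ≤ Real.exp 41 * (gaussianPDFReal 8 1 x + gaussianPDFReal (-8) 1 x) := by
      rw [gauss_shift 8 x, gauss_shift (-8) x]
      have e1 : Real.exp 41 * Real.exp ((8:ℝ)*x - 8^2/2) = Real.exp (8*x + 9) := by
        rw [← Real.exp_add]
        congr 1
        ring
      have e2 : Real.exp 41 * Real.exp ((-8:ℝ)*x - (-8)^2/2) = Real.exp (8*(-x) + 9) := by
        rw [← Real.exp_add]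
        congr 1
        ring
      rcases abs_cases x with ⟨h, _⟩ | ⟨h, _⟩ <;> rw [h] <;>
        nlinarith [Real.exp_pos ((8:ℝ)*x + 9), Real.exp_pos ((8:ℝ)*(-x) + 9), hg0.le, e1, e2,
          mul_pos (Real.exp_pos ((8:ℝ)*x + 9)) hg0, mul_pos (Real.exp_pos ((8:ℝ)*(-x) + 9)) hg0]
    have hc2 : 2592 * (ε^2 * γs^4) * (Real.exp (8*|x| + 9) * gaussianPDFReal 0 1 x)
        ≤ 2592 * (ε^2 * γs^4)
          * (Real.exp 41 * (gaussianPDFReal 8 1 x + gaussianPDFReal (-8) 1 x)) :=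
      mul_le_mul_of_nonneg_left hgauss (by positivity)
    have hfinal : 2592 * (ε^2 * γs^4)
          * (Real.exp 41 * (gaussianPDFReal 8 1 x + gaussianPDFReal (-8) 1 x))
        = 2592 * Real.exp 41 * (ε^2 * γs^4)
          * (gaussianPDFReal 8 1 x + gaussianPDFReal (-8) 1 x) := by ring
    linarith [h1, h2.le, hsq, hc2, hfinal.le]
  have hmono := integral_mono hint hGint hle
  have hGval : ∫ x, (2592 * Real.exp 41 * (ε^2 * γs^4)
      * (gaussianPDFReal 8 1 x + gaussianPDFReal (-8) 1 x)
      + (mixPDF (ζs - ε) (γs * ζs / (ζs - ε)) x - mixPDF ζs γs x))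
      = 5184 * Real.exp 41 * (ε^2 * γs^4) := by
    rw [integral_add hcm hsub,
      integral_const_mul,
      integral_add (integrable_gaussianPDFReal 8 1) (integrable_gaussianPDFReal (-8) 1),
      integral_gaussianPDFReal_eq_one 8 one_ne_zero,
      integral_gaussianPDFReal_eq_one (-8) one_ne_zero,
      integral_sub (integrable_mixPDF _ _) (integrable_mixPDF _ _),
      integral_mixPDF, integral_mixPDF]
    ring
  rw [hGval] at hmono
  exact hmono

/-- KL divergence bound between nearby two-spike Gaussian mixtures (Lemma C.1):
with `ζ = ζ* − ε` and `γ = γ*ζ*/ζ`, `KL(P₁ ‖ P₀) ≤ C ε² γ*⁴`. -/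
theorem kl_divergence_bound :
    ∃ C : ℝ, 0 < C ∧
      ∀ γs ζs ε : ℝ, γs ∈ Set.Ioo (0 : ℝ) 1 → ζs ∈ Set.Ioo (0 : ℝ) (1 / 2) →
      ε ∈ Set.Ioo (0 : ℝ) (2 / 3 * ζs) →
      klDiv (twoSpikeMix (ζs - ε) (γs * ζs / (ζs - ε))) (twoSpikeMix ζs γs) ≤
        C * ε ^ 2 * γs ^ 4 := by
  refine ⟨5184 * Real.exp 41, by positivity, fun γs ζs ε hγ hζ hε => ?_⟩
  have := main_aux γs ζs ε hγ hζ hε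
  calc klDiv (twoSpikeMix (ζs - ε) (γs * ζs / (ζs - ε))) (twoSpikeMix ζs γs)
      ≤ 5184 * Real.exp 41 * (ε^2 * γs^4) := this
    _ = 5184 * Real.exp 41 * ε ^ 2 * γs ^ 4 := by ring
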